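/- If a convex quadrilateral inscribed in an ellipse is a 4-periodic billiard trajectory, then the four tangent lines to the ellipse at its vertices form a rectangle, and the diagonals of that rectangle are parallel to the sides of the (parallelogram) trajectory. -/

import Mathlib

open scoped RealInnerProductSpace

noncomputable section

abbrev Pt := EuclideanSpace ℝ (Fin 2)

def mk2 (x y : ℝ) : Pt := (EuclideanSpace.equiv (Fin 2) ℝ).symm ![x, y]

/-- A direction vector of the tangent line to the ellipse `x²/a² + y²/b² = 1`
at a point `P` of the ellipse. -/
def tangentDir (a b : ℝ) (P : Pt) : Pt := mk2 (-(P 1) / b ^ 2) ((P 0) / a ^ 2)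

/-- Billiard reflection law at the vertex `P i` (tangent line is the exterior
bisector of the angle of the trajectory there). -/
def ReflectsAt (a b : ℝ) {n : ℕ} (P : ZMod n → Pt) (i : ZMod n) : Prop :=
  InnerProductGeometry.angle (P (i - 1) - P i) (tangentDir a b (P i)) =
    InnerProductGeometry.angle (P (i + 1) - P i) (-(tangentDir a b (P i)))

/-- The tangent line to the ellipse `x²/a² + y²/b² = 1` at the point `P`. -/
def TangentLine (a b : ℝ) (P : Pt) : Set Pt :=
  {p : Pt | p 0 * (P 0) / a ^ 2 + p 1 * (P 1) / b ^ 2 = 1}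

lemma inner2 (u v : Pt) : ⟪u, v⟫ = u 0 * v 0 + u 1 * v 1 := by
  simp [PiLp.inner_apply, Fin.sum_univ_two, RCLike.inner_apply]; ring

lemma norm2 (u : Pt) : ‖u‖^2 = u 0^2 + u 1^2 := by
  rw [← real_inner_self_eq_norm_sq, inner2]; ring

lemma ext2 {u v : Pt} (h0 : u 0 = v 0) (h1 : u 1 = v 1) : u = v := by
  refine PiLp.ext fun i => ?_; fin_cases i <;> assumption

lemma ortho_det {d1 d2 v1 v2 w1 w2 : ℝ} (hd : ¬ (d1 = 0 ∧ d2 = 0))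
    (h1 : v1*d1 + v2*d2 = 0) (h2 : w1*d1 + w2*d2 = 0) : v1*w2 - v2*w1 = 0 := by
  rcases not_and_or.1 hd with h | h
  · have : (v1*w2 - v2*w1) * d1 = 0 := by linear_combination w2 * h1 - v2 * h2
    exact (mul_eq_zero.1 this).resolve_right h
  · have : (v1*w2 - v2*w1) * d2 = 0 := by linear_combination (-w1) * h1 + v1 * h2
    exact (mul_eq_zero.1 this).resolve_right h

lemma unit_det_pm {v1 v2 w1 w2 : ℝ} (hv : v1^2 + v2^2 = 1) (hw : w1^2 + w2^2 = 1)
    (hdet : v1*w2 - v2*w1 = 0) : (w1 = v1 ∧ w2 = v2) ∨ (w1 = -v1 ∧ w2 = -v2) := by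
  have h1 : w1 = (v1*w1 + v2*w2) * v1 := by linear_combination (-w1)*hv - v2*hdet
  have h2 : w2 = (v1*w1 + v2*w2) * v2 := by linear_combination (-w2)*hv + v1*hdet
  have hc2 : ((v1*w1 + v2*w2) - 1) * ((v1*w1 + v2*w2) + 1) = 0 := by
    linear_combination (-w1)*h1 - w2*h2 + hw
  rcases mul_eq_zero.1 hc2 with h | h
  · left
    have hc : v1*w1 + v2*w2 = 1 := by linarith
    rw [hc] at h1 h2; constructor <;> linarith
  · right
    have hc : v1*w1 + v2*w2 = -1 := by linarith
    rw [hc] at h1 h2; constructor <;> linarith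

lemma det_parallel {v1 v2 w1 w2 : ℝ} (hdet : v1*w2 - v2*w1 = 0) (hw : ¬(w1 = 0 ∧ w2 = 0)) :
    ∃ c : ℝ, v1 = c * w1 ∧ v2 = c * w2 := by
  rcases not_and_or.1 hw with h | h
  · refine ⟨v1 / w1, by field_simp, ?_⟩
    field_simp; linear_combination -hdet
  · refine ⟨v2 / w2, ?_, by field_simp⟩
    field_simp; linear_combination hdet

lemma mk2_0 (x y : ℝ) : mk2 x y 0 = x := rfl
lemma mk2_1 (x y : ℝ) : mk2 x y 1 = y := rfl
lemma sub_0 (u v : Pt) : (u - v) 0 = u 0 - v 0 := rfl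
lemma sub_1 (u v : Pt) : (u - v) 1 = u 1 - v 1 := rfl
lemma smul_0 (c : ℝ) (u : Pt) : (c • u) 0 = c * u 0 := rfl
lemma smul_1 (c : ℝ) (u : Pt) : (c • u) 1 = c * u 1 := rfl

lemma memb {a b N0 N1 u v w z X Y : ℝ} (ha : a ≠ 0) (hb : b ≠ 0) (hN0 : N0 ≠ 0) (hN1 : N1 ≠ 0)
    (h : (b^2*u*X + a^2*w*Y)*N1 + (b^2*v*X + a^2*z*Y)*N0 = N0*N1) :
    (a*b^2*(u/N0 + v/N1)) * (a*X) / a^2 + (a^2*b*(w/N0 + z/N1)) * (b*Y) / b^2 = 1 := by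
  field_simp
  linear_combination h

lemma refl_scalar {u v t : Pt} (hu : u ≠ 0) (hv : v ≠ 0) (ht : t ≠ 0)
    (h : InnerProductGeometry.angle u t = InnerProductGeometry.angle v (-t)) :
    ⟪u,t⟫ * ‖v‖ + ⟪v,t⟫ * ‖u‖ = 0 := by
  have h2 := congrArg Real.cos h
  rw [InnerProductGeometry.cos_angle, InnerProductGeometry.cos_angle,
    inner_neg_right, norm_neg] at h2
  have hnu : (0:ℝ) < ‖u‖ := norm_pos_iff.2 hu
  have hnv : (0:ℝ) < ‖v‖ := norm_pos_iff.2 hv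
  have hnt : (0:ℝ) < ‖t‖ := norm_pos_iff.2 ht
  field_simp at h2
  rw [show (inner ℝ u t : ℝ) = u 0 * t 0 + u 1 * t 1 by
      simp [PiLp.inner_apply, Fin.sum_univ_two, RCLike.inner_apply]; ring,
    show (inner ℝ v t : ℝ) = v 0 * t 0 + v 1 * t 1 by
      simp [PiLp.inner_apply, Fin.sum_univ_two, RCLike.inner_apply]; ring]
  have h3 : ((u 0 * t 0 + u 1 * t 1) * ‖v‖ + (v 0 * t 0 + v 1 * t 1) * ‖u‖) * ‖t‖ = 0 := by
    rw [← inner2 u t, ← inner2 v t]; linear_combination ‖t‖ * h2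
  rcases mul_eq_zero.1 h3 with h4 | h4
  · exact h4
  · exact absurd h4 (ne_of_gt hnt)

lemma vertexRel {a b xp yp xc yc xn yn lp ln : ℝ}
    (ha : 0 < a) (hb : 0 < b)
    (hc : xc^2 + yc^2 = 1)
    (hlp : lp^2 = a^2*(xp-xc)^2 + b^2*(yp-yc)^2)
    (hln : ln^2 = a^2*(xn-xc)^2 + b^2*(yn-yc)^2)
    (hlp0 : 0 < lp) (hln0 : 0 < ln)
    (hKp : 0 < 1 - xp*xc - yp*yc) (hKc : 0 < 1 - xc*xn - yc*yn)
    (hrefl : (b^2*xc*(yp-yc) - a^2*yc*(xp-xc)) * ln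
           + (b^2*xc*(yn-yc) - a^2*yc*(xn-xc)) * lp = 0) :
    (1 - xp*xc - yp*yc) * ln = (1 - xc*xn - yc*yn) * lp := by
  have hPu : (a*b*(1 - xp*xc - yp*yc))^2 + (b^2*xc*(yp-yc) - a^2*yc*(xp-xc))^2
      = (b^2*xc^2 + a^2*yc^2) * lp^2 := by
    rw [hlp]
    linear_combination ((a*b*(xc*(xp-xc)+yc*(yp-yc)) - a*b*(1 - xp*xc - yp*yc))*a*b) * hc
  have hPv : (a*b*(1 - xc*xn - yc*yn))^2 + (b^2*xc*(yn-yc) - a^2*yc*(xn-xc))^2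
      = (b^2*xc^2 + a^2*yc^2) * ln^2 := by
    rw [hln]
    linear_combination ((a*b*(xc*(xn-xc)+yc*(yn-yc)) - a*b*(1 - xc*xn - yc*yn))*a*b) * hc
  have h4 : a^2*b^2*(((1 - xp*xc - yp*yc)*ln)^2 - ((1 - xc*xn - yc*yn)*lp)^2)
      = ((b^2*xc*(yn-yc) - a^2*yc*(xn-xc))*lp - (b^2*xc*(yp-yc) - a^2*yc*(xp-xc))*ln)
        * ((b^2*xc*(yn-yc) - a^2*yc*(xn-xc))*lp + (b^2*xc*(yp-yc) - a^2*yc*(xp-xc))*ln) := by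
    linear_combination ln^2 * hPu - lp^2 * hPv
  rw [show (b^2*xc*(yn-yc) - a^2*yc*(xn-xc))*lp + (b^2*xc*(yp-yc) - a^2*yc*(xp-xc))*ln = 0
      by linear_combination hrefl, mul_zero] at h4
  have h5 : ((1 - xp*xc - yp*yc)*ln)^2 = ((1 - xc*xn - yc*yn)*lp)^2 := by
    have hab : a^2*b^2 ≠ 0 := by positivity
    rcases mul_eq_zero.1 h4 with h | h
    · exact absurd h hab
    · linarith
  have h6 : ((1 - xp*xc - yp*yc)*ln - (1 - xc*xn - yc*yn)*lp)
      * ((1 - xp*xc - yp*yc)*ln + (1 - xc*xn - yc*yn)*lp) = 0 := by linear_combination h5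
  rcases mul_eq_zero.1 h6 with h | h
  · linear_combination h
  · have hpos := add_pos (mul_pos hKp hln0) (mul_pos hKc hlp0)
    exact absurd h (ne_of_gt hpos)

lemma chordRel {a b x y X Y l : ℝ} (hx : x^2+y^2 = 1) (hX : X^2+Y^2 = 1)
    (hl : l^2 = a^2*(X-x)^2 + b^2*(Y-y)^2) :
    l^2 = (1 - x*X - y*Y) * ((a^2+b^2) - (a^2-b^2)*(x*X - y*Y)) := by
  rw [hl]
  linear_combination (a^2 - (a^2-b^2)*X^2) * hx + (b^2 + (a^2-b^2)*y^2) * hX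

lemma Kpos {x y X Y : ℝ} (hx : x^2+y^2 = 1) (hX : X^2+Y^2 = 1)
    (h : ¬(X = x ∧ Y = y)) : 0 < 1 - x*X - y*Y := by
  have key : (X-x)^2 + (Y-y)^2 = 2*(1 - x*X - y*Y) := by linear_combination hx + hX
  rcases not_and_or.1 h with h1 | h1
  · nlinarith [pow_two_pos_of_ne_zero (sub_ne_zero.2 h1), sq_nonneg (Y-y)]
  · nlinarith [pow_two_pos_of_ne_zero (sub_ne_zero.2 h1), sq_nonneg (X-x)]

set_option maxHeartbeats 4000000 in
/-- For a convex 4-periodic billiard trajectory in an ellipse, the tangent lines at the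
four vertices form a rectangle, and the diagonals of that rectangle are parallel to the
sides of the (parallelogram) trajectory. -/
theorem tangent_lines_form_rectangle
    (a b : ℝ) (hb : 0 < b) (hab : b < a)
    (P : ZMod 4 → Pt)
    (honE : ∀ i : ZMod 4, (P i 0) ^ 2 / a ^ 2 + (P i 1) ^ 2 / b ^ 2 = 1)
    (hconvex : ∀ i : ZMod 4,
      P i ∉ convexHull ℝ ({P (i + 1), P (i + 2), P (i + 3)} : Set Pt))
    (hcross : (openSegment ℝ (P 0) (P 2) ∩ openSegment ℝ (P 1) (P 3)).Nonempty)
    (hrefl : ∀ i : ZMod 4, ReflectsAt a b P i) :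
    ∃ R : ZMod 4 → Pt,
      (∀ i : ZMod 4, R i ∈ TangentLine a b (P i) ∧ R i ∈ TangentLine a b (P (i + 1))) ∧
      -- R 0 R 1 R 2 R 3 is a rectangle
      (R 0 - R 1 = R 3 - R 2) ∧ ⟪R 1 - R 0, R 3 - R 0⟫ = 0 ∧
      -- its diagonals are parallel to the sides of the parallelogram trajectory
      (∃ s : ℝ, R 2 - R 0 = s • (P 2 - P 1)) ∧
      (∃ t : ℝ, R 3 - R 1 = t • (P 1 - P 0)) := by
  have ha : (0:ℝ) < a := lt_trans hb hab
  have ha' : a ≠ 0 := ne_of_gt ha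
  have hb' : b ≠ 0 := ne_of_gt hb
  -- coordinates
  obtain ⟨x0, hPx0⟩ : ∃ x, P 0 0 = a * x := ⟨P 0 0 / a, by field_simp⟩
  obtain ⟨y0, hPy0⟩ : ∃ y, P 0 1 = b * y := ⟨P 0 1 / b, by field_simp⟩
  obtain ⟨x1, hPx1⟩ : ∃ x, P 1 0 = a * x := ⟨P 1 0 / a, by field_simp⟩
  obtain ⟨y1, hPy1⟩ : ∃ y, P 1 1 = b * y := ⟨P 1 1 / b, by field_simp⟩
  obtain ⟨x2, hPx2⟩ : ∃ x, P 2 0 = a * x := ⟨P 2 0 / a, by field_simp⟩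
  obtain ⟨y2, hPy2⟩ : ∃ y, P 2 1 = b * y := ⟨P 2 1 / b, by field_simp⟩
  obtain ⟨x3, hPx3⟩ : ∃ x, P 3 0 = a * x := ⟨P 3 0 / a, by field_simp⟩
  obtain ⟨y3, hPy3⟩ : ∃ y, P 3 1 = b * y := ⟨P 3 1 / b, by field_simp⟩
  have hu0 : x0^2 + y0^2 = 1 := by
    have h := honE 0; rw [hPx0, hPy0] at h; field_simp at h
    have h2 : (x0^2+y0^2) * (a^2*b^2) = 1 * (a^2*b^2) := by linear_combination (a^2*b^2) * h
    exact mul_right_cancel₀ (by positivity) h2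
  have hu1 : x1^2 + y1^2 = 1 := by
    have h := honE 1; rw [hPx1, hPy1] at h; field_simp at h
    have h2 : (x1^2+y1^2) * (a^2*b^2) = 1 * (a^2*b^2) := by linear_combination (a^2*b^2) * h
    exact mul_right_cancel₀ (by positivity) h2
  have hu2 : x2^2 + y2^2 = 1 := by
    have h := honE 2; rw [hPx2, hPy2] at h; field_simp at h
    have h2 : (x2^2+y2^2) * (a^2*b^2) = 1 * (a^2*b^2) := by linear_combination (a^2*b^2) * h
    exact mul_right_cancel₀ (by positivity) h2
  have hu3 : x3^2 + y3^2 = 1 := by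
    have h := honE 3; rw [hPx3, hPy3] at h; field_simp at h
    have h2 : (x3^2+y3^2) * (a^2*b^2) = 1 * (a^2*b^2) := by linear_combination (a^2*b^2) * h
    exact mul_right_cancel₀ (by positivity) h2
  -- distinctness
  have kfact : ∀ k : ZMod 4, k ≠ 0 → (k = 1 ∨ k = 2 ∨ k = 3) := by decide
  have hsubne : ∀ i k : ZMod 4, k ≠ 0 → P i ≠ P (i + k) := by
    intro i k hk h
    apply hconvex i
    have hmem : P (i+k) ∈ ({P (i + 1), P (i + 2), P (i + 3)} : Set Pt) := by
      rcases kfact k hk with rfl | rfl | rfl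
      · exact Set.mem_insert _ _
      · exact Set.mem_insert_of_mem _ (Set.mem_insert _ _)
      · exact Set.mem_insert_of_mem _ (Set.mem_insert_of_mem _ rfl)
    rw [h]
    exact subset_convexHull ℝ _ hmem
  have hP01 : P 0 ≠ P 1 := by have := hsubne 0 1 (by decide); rwa [show ((0:ZMod 4)+1) = 1 by decide] at this
  have hP02 : P 0 ≠ P 2 := by have := hsubne 0 2 (by decide); rwa [show ((0:ZMod 4)+2) = 2 by decide] at this
  have hP03 : P 0 ≠ P 3 := by have := hsubne 0 3 (by decide); rwa [show ((0:ZMod 4)+3) = 3 by decide] at this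
  have hP12 : P 1 ≠ P 2 := by have := hsubne 1 1 (by decide); rwa [show ((1:ZMod 4)+1) = 2 by decide] at this
  have hP13 : P 1 ≠ P 3 := by have := hsubne 1 2 (by decide); rwa [show ((1:ZMod 4)+2) = 3 by decide] at this
  have hP23 : P 2 ≠ P 3 := by have := hsubne 2 1 (by decide); rwa [show ((2:ZMod 4)+1) = 3 by decide] at this
  have hQ01 : ¬(x1 = x0 ∧ y1 = y0) := by
    rintro ⟨h1, h2⟩
    exact hP01 (ext2 (by rw [hPx0, hPx1, h1]) (by rw [hPy0, hPy1, h2]))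
  have hQ12 : ¬(x2 = x1 ∧ y2 = y1) := by
    rintro ⟨h1, h2⟩
    exact hP12 (ext2 (by rw [hPx1, hPx2, h1]) (by rw [hPy1, hPy2, h2]))
  have hQ23 : ¬(x3 = x2 ∧ y3 = y2) := by
    rintro ⟨h1, h2⟩
    exact hP23 (ext2 (by rw [hPx2, hPx3, h1]) (by rw [hPy2, hPy3, h2]))
  have hQ30 : ¬(x0 = x3 ∧ y0 = y3) := by
    rintro ⟨h1, h2⟩
    exact hP03 (ext2 (by rw [hPx0, hPx3, h1]) (by rw [hPy0, hPy3, h2])).symm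
  have hQ02 : ¬(x2 = x0 ∧ y2 = y0) := by
    rintro ⟨h1, h2⟩
    exact hP02 (ext2 (by rw [hPx0, hPx2, h1]) (by rw [hPy0, hPy2, h2]))
  have hQ13 : ¬(x3 = x1 ∧ y3 = y1) := by
    rintro ⟨h1, h2⟩
    exact hP13 (ext2 (by rw [hPx1, hPx3, h1]) (by rw [hPy1, hPy3, h2]))
  -- K positivity
  have hK0pos : 0 < (1 - x0*x1 - y0*y1) := Kpos hu0 hu1 hQ01
  have hK1pos : 0 < (1 - x1*x2 - y1*y2) := Kpos hu1 hu2 hQ12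
  have hK2pos : 0 < (1 - x2*x3 - y2*y3) := Kpos hu2 hu3 hQ23
  have hK3pos : 0 < (1 - x3*x0 - y3*y0) := Kpos hu3 hu0 hQ30
  -- chord lengths
  set l0 : ℝ := ‖P 1 - P 0‖ with hl0d
  set l1 : ℝ := ‖P 2 - P 1‖ with hl1d
  set l2 : ℝ := ‖P 3 - P 2‖ with hl2d
  set l3 : ℝ := ‖P 0 - P 3‖ with hl3d
  have hl0pos : 0 < l0 := norm_pos_iff.2 (sub_ne_zero.2 hP01.symm)
  have hl1pos : 0 < l1 := norm_pos_iff.2 (sub_ne_zero.2 hP12.symm)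
  have hl2pos : 0 < l2 := norm_pos_iff.2 (sub_ne_zero.2 hP23.symm)
  have hl3pos : 0 < l3 := norm_pos_iff.2 (sub_ne_zero.2 hP03)
  have hl0sq : l0^2 = a^2*(x1-x0)^2 + b^2*(y1-y0)^2 := by
    rw [hl0d, norm2, show (P 1 - P 0) 0 = P 1 0 - P 0 0 from rfl,
      show (P 1 - P 0) 1 = P 1 1 - P 0 1 from rfl, hPx0, hPx1, hPy0, hPy1]; ring
  have hl1sq : l1^2 = a^2*(x2-x1)^2 + b^2*(y2-y1)^2 := by
    rw [hl1d, norm2, show (P 2 - P 1) 0 = P 2 0 - P 1 0 from rfl,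
      show (P 2 - P 1) 1 = P 2 1 - P 1 1 from rfl, hPx1, hPx2, hPy1, hPy2]; ring
  have hl2sq : l2^2 = a^2*(x3-x2)^2 + b^2*(y3-y2)^2 := by
    rw [hl2d, norm2, show (P 3 - P 2) 0 = P 3 0 - P 2 0 from rfl,
      show (P 3 - P 2) 1 = P 3 1 - P 2 1 from rfl, hPx2, hPx3, hPy2, hPy3]; ring
  have hl3sq : l3^2 = a^2*(x0-x3)^2 + b^2*(y0-y3)^2 := by
    rw [hl3d, norm2, show (P 0 - P 3) 0 = P 0 0 - P 3 0 from rfl,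
      show (P 0 - P 3) 1 = P 0 1 - P 3 1 from rfl, hPx0, hPx3, hPy0, hPy3]; ring
  -- tangent directions nonzero
  have ht0 : tangentDir a b (P 0) ≠ 0 := by
    intro h
    have h0 : -(P 0 1)/b^2 = 0 := congrArg (fun v : Pt => v 0) h
    have h1 : (P 0 0)/a^2 = 0 := congrArg (fun v : Pt => v 1) h
    rw [hPy0] at h0; rw [hPx0] at h1
    field_simp at h0 h1
    have hyz : y0 = 0 := by linarith
    have hxz : x0 = 0 := by linarith
    rw [hxz, hyz] at hu0; norm_num at hu0
  have ht1 : tangentDir a b (P 1) ≠ 0 := by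
    intro h
    have h0 : -(P 1 1)/b^2 = 0 := congrArg (fun v : Pt => v 0) h
    have h1 : (P 1 0)/a^2 = 0 := congrArg (fun v : Pt => v 1) h
    rw [hPy1] at h0; rw [hPx1] at h1
    field_simp at h0 h1
    have hyz : y1 = 0 := by linarith
    have hxz : x1 = 0 := by linarith
    rw [hxz, hyz] at hu1; norm_num at hu1
  have ht2 : tangentDir a b (P 2) ≠ 0 := by
    intro h
    have h0 : -(P 2 1)/b^2 = 0 := congrArg (fun v : Pt => v 0) h
    have h1 : (P 2 0)/a^2 = 0 := congrArg (fun v : Pt => v 1) h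
    rw [hPy2] at h0; rw [hPx2] at h1
    field_simp at h0 h1
    have hyz : y2 = 0 := by linarith
    have hxz : x2 = 0 := by linarith
    rw [hxz, hyz] at hu2; norm_num at hu2
  have ht3 : tangentDir a b (P 3) ≠ 0 := by
    intro h
    have h0 : -(P 3 1)/b^2 = 0 := congrArg (fun v : Pt => v 0) h
    have h1 : (P 3 0)/a^2 = 0 := congrArg (fun v : Pt => v 1) h
    rw [hPy3] at h0; rw [hPx3] at h1
    field_simp at h0 h1
    have hyz : y3 = 0 := by linarith
    have hxz : x3 = 0 := by linarith
    rw [hxz, hyz] at hu3; norm_num at hu3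
  have hang0 : InnerProductGeometry.angle (P 3 - P 0) (tangentDir a b (P 0)) =
      InnerProductGeometry.angle (P 1 - P 0) (-(tangentDir a b (P 0))) := by
    have h := hrefl 0
    unfold ReflectsAt at h
    rwa [show ((0:ZMod 4) - 1) = 3 by decide, show ((0:ZMod 4) + 1) = 1 by decide] at h
  have hs0 := refl_scalar (sub_ne_zero.2 hP03.symm)
    (sub_ne_zero.2 hP01.symm) ht0 hang0
  rw [inner2, inner2, show (P 3 - P 0) 0 = P 3 0 - P 0 0 from rfl,
    show (P 3 - P 0) 1 = P 3 1 - P 0 1 from rfl,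
    show (P 1 - P 0) 0 = P 1 0 - P 0 0 from rfl,
    show (P 1 - P 0) 1 = P 1 1 - P 0 1 from rfl,
    show (tangentDir a b (P 0)) 0 = -(P 0 1)/b^2 from rfl,
    show (tangentDir a b (P 0)) 1 = (P 0 0)/a^2 from rfl,
    hPx3, hPy3, hPx0, hPy0, hPx1, hPy1] at hs0
  rw [show ‖P 1 - P 0‖ = l0 from rfl,
    show ‖P 3 - P 0‖ = l3 from (norm_sub_rev _ _).trans rfl] at hs0
  have hr0' : (a*b) * ((b^2*x0*(y3-y0) - a^2*y0*(x3-x0)) * l0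
      + (b^2*x0*(y1-y0) - a^2*y0*(x1-x0)) * l3) = 0 := by
    field_simp at hs0
    linear_combination (a*b) * hs0
  have hr0 : (b^2*x0*(y3-y0) - a^2*y0*(x3-x0)) * l0
      + (b^2*x0*(y1-y0) - a^2*y0*(x1-x0)) * l3 = 0 :=
    (mul_eq_zero.1 hr0').resolve_left (mul_ne_zero ha' hb')
  have hang1 : InnerProductGeometry.angle (P 0 - P 1) (tangentDir a b (P 1)) =
      InnerProductGeometry.angle (P 2 - P 1) (-(tangentDir a b (P 1))) := by
    have h := hrefl 1
    unfold ReflectsAt at h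
    rwa [show ((1:ZMod 4) - 1) = 0 by decide, show ((1:ZMod 4) + 1) = 2 by decide] at h
  have hs1 := refl_scalar (sub_ne_zero.2 hP01)
    (sub_ne_zero.2 hP12.symm) ht1 hang1
  rw [inner2, inner2, show (P 0 - P 1) 0 = P 0 0 - P 1 0 from rfl,
    show (P 0 - P 1) 1 = P 0 1 - P 1 1 from rfl,
    show (P 2 - P 1) 0 = P 2 0 - P 1 0 from rfl,
    show (P 2 - P 1) 1 = P 2 1 - P 1 1 from rfl,
    show (tangentDir a b (P 1)) 0 = -(P 1 1)/b^2 from rfl,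
    show (tangentDir a b (P 1)) 1 = (P 1 0)/a^2 from rfl,
    hPx0, hPy0, hPx1, hPy1, hPx2, hPy2] at hs1
  rw [show ‖P 2 - P 1‖ = l1 from rfl,
    show ‖P 0 - P 1‖ = l0 from (norm_sub_rev _ _).trans rfl] at hs1
  have hr1' : (a*b) * ((b^2*x1*(y0-y1) - a^2*y1*(x0-x1)) * l1
      + (b^2*x1*(y2-y1) - a^2*y1*(x2-x1)) * l0) = 0 := by
    field_simp at hs1
    linear_combination (a*b) * hs1
  have hr1 : (b^2*x1*(y0-y1) - a^2*y1*(x0-x1)) * l1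
      + (b^2*x1*(y2-y1) - a^2*y1*(x2-x1)) * l0 = 0 :=
    (mul_eq_zero.1 hr1').resolve_left (mul_ne_zero ha' hb')
  have hang2 : InnerProductGeometry.angle (P 1 - P 2) (tangentDir a b (P 2)) =
      InnerProductGeometry.angle (P 3 - P 2) (-(tangentDir a b (P 2))) := by
    have h := hrefl 2
    unfold ReflectsAt at h
    rwa [show ((2:ZMod 4) - 1) = 1 by decide, show ((2:ZMod 4) + 1) = 3 by decide] at h
  have hs2 := refl_scalar (sub_ne_zero.2 hP12)
    (sub_ne_zero.2 hP23.symm) ht2 hang2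
  rw [inner2, inner2, show (P 1 - P 2) 0 = P 1 0 - P 2 0 from rfl,
    show (P 1 - P 2) 1 = P 1 1 - P 2 1 from rfl,
    show (P 3 - P 2) 0 = P 3 0 - P 2 0 from rfl,
    show (P 3 - P 2) 1 = P 3 1 - P 2 1 from rfl,
    show (tangentDir a b (P 2)) 0 = -(P 2 1)/b^2 from rfl,
    show (tangentDir a b (P 2)) 1 = (P 2 0)/a^2 from rfl,
    hPx1, hPy1, hPx2, hPy2, hPx3, hPy3] at hs2
  rw [show ‖P 3 - P 2‖ = l2 from rfl,
    show ‖P 1 - P 2‖ = l1 from (norm_sub_rev _ _).trans rfl] at hs2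
  have hr2' : (a*b) * ((b^2*x2*(y1-y2) - a^2*y2*(x1-x2)) * l2
      + (b^2*x2*(y3-y2) - a^2*y2*(x3-x2)) * l1) = 0 := by
    field_simp at hs2
    linear_combination (a*b) * hs2
  have hr2 : (b^2*x2*(y1-y2) - a^2*y2*(x1-x2)) * l2
      + (b^2*x2*(y3-y2) - a^2*y2*(x3-x2)) * l1 = 0 :=
    (mul_eq_zero.1 hr2').resolve_left (mul_ne_zero ha' hb')
  have hang3 : InnerProductGeometry.angle (P 2 - P 3) (tangentDir a b (P 3)) =
      InnerProductGeometry.angle (P 0 - P 3) (-(tangentDir a b (P 3))) := by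
    have h := hrefl 3
    unfold ReflectsAt at h
    rwa [show ((3:ZMod 4) - 1) = 2 by decide, show ((3:ZMod 4) + 1) = 0 by decide] at h
  have hs3 := refl_scalar (sub_ne_zero.2 hP23)
    (sub_ne_zero.2 hP03) ht3 hang3
  rw [inner2, inner2, show (P 2 - P 3) 0 = P 2 0 - P 3 0 from rfl,
    show (P 2 - P 3) 1 = P 2 1 - P 3 1 from rfl,
    show (P 0 - P 3) 0 = P 0 0 - P 3 0 from rfl,
    show (P 0 - P 3) 1 = P 0 1 - P 3 1 from rfl,
    show (tangentDir a b (P 3)) 0 = -(P 3 1)/b^2 from rfl,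
    show (tangentDir a b (P 3)) 1 = (P 3 0)/a^2 from rfl,
    hPx2, hPy2, hPx3, hPy3, hPx0, hPy0] at hs3
  rw [show ‖P 0 - P 3‖ = l3 from rfl,
    show ‖P 2 - P 3‖ = l2 from (norm_sub_rev _ _).trans rfl] at hs3
  have hr3' : (a*b) * ((b^2*x3*(y2-y3) - a^2*y3*(x2-x3)) * l3
      + (b^2*x3*(y0-y3) - a^2*y3*(x0-x3)) * l2) = 0 := by
    field_simp at hs3
    linear_combination (a*b) * hs3
  have hr3 : (b^2*x3*(y2-y3) - a^2*y3*(x2-x3)) * l3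
      + (b^2*x3*(y0-y3) - a^2*y3*(x0-x3)) * l2 = 0 :=
    (mul_eq_zero.1 hr3').resolve_left (mul_ne_zero ha' hb')
  -- vertex relations
  -- vertex relations
  have hl3sq0 : l3^2 = a^2*(x3-x0)^2 + b^2*(y3-y0)^2 := by rw [hl3sq]; ring
  have hl0sq0 : l0^2 = a^2*(x1-x0)^2 + b^2*(y1-y0)^2 := hl0sq
  have V0 : (1 - x3*x0 - y3*y0) * l0 = (1 - x0*x1 - y0*y1) * l3 :=
    vertexRel ha hb hu0 hl3sq0 hl0sq0 hl3pos hl0pos hK3pos hK0pos hr0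
  have hl0sq1 : l0^2 = a^2*(x0-x1)^2 + b^2*(y0-y1)^2 := by rw [hl0sq]; ring
  have hl1sq1 : l1^2 = a^2*(x2-x1)^2 + b^2*(y2-y1)^2 := hl1sq
  have V1 : (1 - x0*x1 - y0*y1) * l1 = (1 - x1*x2 - y1*y2) * l0 :=
    vertexRel ha hb hu1 hl0sq1 hl1sq1 hl0pos hl1pos hK0pos hK1pos hr1
  have hl1sq2 : l1^2 = a^2*(x1-x2)^2 + b^2*(y1-y2)^2 := by rw [hl1sq]; ring
  have hl2sq2 : l2^2 = a^2*(x3-x2)^2 + b^2*(y3-y2)^2 := hl2sq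
  have V2 : (1 - x1*x2 - y1*y2) * l2 = (1 - x2*x3 - y2*y3) * l1 :=
    vertexRel ha hb hu2 hl1sq2 hl2sq2 hl1pos hl2pos hK1pos hK2pos hr2
  have hl2sq3 : l2^2 = a^2*(x2-x3)^2 + b^2*(y2-y3)^2 := by rw [hl2sq]; ring
  have hl3sq3 : l3^2 = a^2*(x0-x3)^2 + b^2*(y0-y3)^2 := hl3sq
  have V3 : (1 - x2*x3 - y2*y3) * l3 = (1 - x3*x0 - y3*y0) * l2 :=
    vertexRel ha hb hu3 hl2sq3 hl3sq3 hl2pos hl3pos hK2pos hK3pos hr3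
  -- chord identities l_i^2 = K_i * rho_i
  have hch0 : l0^2 = (1 - x0*x1 - y0*y1) * ((a^2+b^2) - (a^2-b^2)*(x0*x1 - y0*y1)) := chordRel hu0 hu1 hl0sq
  have hch1 : l1^2 = (1 - x1*x2 - y1*y2) * ((a^2+b^2) - (a^2-b^2)*(x1*x2 - y1*y2)) := chordRel hu1 hu2 hl1sq
  have hch2 : l2^2 = (1 - x2*x3 - y2*y3) * ((a^2+b^2) - (a^2-b^2)*(x2*x3 - y2*y3)) := chordRel hu2 hu3 hl2sq
  have hch3 : l3^2 = (1 - x3*x0 - y3*y0) * ((a^2+b^2) - (a^2-b^2)*(x3*x0 - y3*y0)) := chordRel hu3 hu0 hl3sq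
  have hrho0pos : 0 < ((a^2+b^2) - (a^2-b^2)*(x0*x1 - y0*y1)) := by
    have hKR : 0 < (1 - x0*x1 - y0*y1) * ((a^2+b^2) - (a^2-b^2)*(x0*x1 - y0*y1)) := by rw [← hch0]; positivity
    rcases mul_pos_iff.1 hKR with ⟨_, h⟩ | ⟨h, _⟩
    · exact h
    · linarith
  -- cross relations  K0 * rho_i = K_i * rho_0
  have hsq1 : (1 - x0*x1 - y0*y1)^2 * l1^2 = (1 - x1*x2 - y1*y2)^2 * l0^2 := by
    linear_combination ((1 - x0*x1 - y0*y1)*l1 + (1 - x1*x2 - y1*y2)*l0) * V1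
  rw [hch0, hch1] at hsq1
  have hx01 : (1 - x0*x1 - y0*y1) * ((a^2+b^2) - (a^2-b^2)*(x1*x2 - y1*y2)) = (1 - x1*x2 - y1*y2) * ((a^2+b^2) - (a^2-b^2)*(x0*x1 - y0*y1)) :=
    mul_left_cancel₀ (mul_ne_zero (ne_of_gt hK0pos) (ne_of_gt hK1pos))
      (by linear_combination hsq1)
  have hsq0 : (1 - x3*x0 - y3*y0)^2 * l0^2 = (1 - x0*x1 - y0*y1)^2 * l3^2 := by
    linear_combination ((1 - x3*x0 - y3*y0)*l0 + (1 - x0*x1 - y0*y1)*l3) * V0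
  rw [hch0, hch3] at hsq0
  have hx03 : (1 - x0*x1 - y0*y1) * ((a^2+b^2) - (a^2-b^2)*(x3*x0 - y3*y0)) = (1 - x3*x0 - y3*y0) * ((a^2+b^2) - (a^2-b^2)*(x0*x1 - y0*y1)) :=
    mul_left_cancel₀ (mul_ne_zero (ne_of_gt hK0pos) (ne_of_gt hK3pos))
      (by linear_combination -hsq0)
  have hsq2 : (1 - x1*x2 - y1*y2)^2 * l2^2 = (1 - x2*x3 - y2*y3)^2 * l1^2 := by
    linear_combination ((1 - x1*x2 - y1*y2)*l2 + (1 - x2*x3 - y2*y3)*l1) * V2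
  rw [hch1, hch2] at hsq2
  have hx12 : (1 - x1*x2 - y1*y2) * ((a^2+b^2) - (a^2-b^2)*(x2*x3 - y2*y3)) = (1 - x2*x3 - y2*y3) * ((a^2+b^2) - (a^2-b^2)*(x1*x2 - y1*y2)) :=
    mul_left_cancel₀ (mul_ne_zero (ne_of_gt hK1pos) (ne_of_gt hK2pos))
      (by linear_combination hsq2)
  have hx02 : (1 - x0*x1 - y0*y1) * ((a^2+b^2) - (a^2-b^2)*(x2*x3 - y2*y3)) = (1 - x2*x3 - y2*y3) * ((a^2+b^2) - (a^2-b^2)*(x0*x1 - y0*y1)) :=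
    mul_left_cancel₀ (ne_of_gt hK1pos)
      (by linear_combination (1 - x0*x1 - y0*y1)*hx12 + (1 - x2*x3 - y2*y3)*hx01)
  -- linear chord relations
  have rel0 : (((a^2+b^2) - (a^2-b^2)*(x0*x1 - y0*y1)) - (1 - x0*x1 - y0*y1)*(a^2-b^2))*(x0*x1) + (((a^2+b^2) - (a^2-b^2)*(x0*x1 - y0*y1)) + (1 - x0*x1 - y0*y1)*(a^2-b^2))*(y0*y1) = (((a^2+b^2) - (a^2-b^2)*(x0*x1 - y0*y1)) - (1 - x0*x1 - y0*y1)*(a^2+b^2)) := by ring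
  have rel1 : (((a^2+b^2) - (a^2-b^2)*(x0*x1 - y0*y1)) - (1 - x0*x1 - y0*y1)*(a^2-b^2))*(x1*x2) + (((a^2+b^2) - (a^2-b^2)*(x0*x1 - y0*y1)) + (1 - x0*x1 - y0*y1)*(a^2-b^2))*(y1*y2) = (((a^2+b^2) - (a^2-b^2)*(x0*x1 - y0*y1)) - (1 - x0*x1 - y0*y1)*(a^2+b^2)) := by linear_combination hx01
  have rel2 : (((a^2+b^2) - (a^2-b^2)*(x0*x1 - y0*y1)) - (1 - x0*x1 - y0*y1)*(a^2-b^2))*(x2*x3) + (((a^2+b^2) - (a^2-b^2)*(x0*x1 - y0*y1)) + (1 - x0*x1 - y0*y1)*(a^2-b^2))*(y2*y3) = (((a^2+b^2) - (a^2-b^2)*(x0*x1 - y0*y1)) - (1 - x0*x1 - y0*y1)*(a^2+b^2)) := by linear_combination hx02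
  have rel3 : (((a^2+b^2) - (a^2-b^2)*(x0*x1 - y0*y1)) - (1 - x0*x1 - y0*y1)*(a^2-b^2))*(x3*x0) + (((a^2+b^2) - (a^2-b^2)*(x0*x1 - y0*y1)) + (1 - x0*x1 - y0*y1)*(a^2-b^2))*(y3*y0) = (((a^2+b^2) - (a^2-b^2)*(x0*x1 - y0*y1)) - (1 - x0*x1 - y0*y1)*(a^2+b^2)) := by linear_combination hx03
  have haabb : (0:ℝ) < a^2 - b^2 := by
    rw [show a^2 - b^2 = (a-b)*(a+b) by ring]
    exact mul_pos (by linarith) (by linarith)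
  have hQQpos : 0 < (((a^2+b^2) - (a^2-b^2)*(x0*x1 - y0*y1)) + (1 - x0*x1 - y0*y1)*(a^2-b^2)) := add_pos hrho0pos (mul_pos hK0pos haabb)
  have hQQne := ne_of_gt hQQpos
  rcases eq_or_ne ((((a^2+b^2) - (a^2-b^2)*(x0*x1 - y0*y1)) - (1 - x0*x1 - y0*y1)*(a^2-b^2))) 0 with hPP | hPP
  · exfalso
    have hCCval : (((a^2+b^2) - (a^2-b^2)*(x0*x1 - y0*y1)) - (1 - x0*x1 - y0*y1)*(a^2+b^2)) = -(2*(1 - x0*x1 - y0*y1)*b^2) := by linear_combination hPP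
    have h2K : 0 < 2*(1 - x0*x1 - y0*y1)*b^2 := mul_pos (mul_pos two_pos hK0pos) (pow_pos hb 2)
    have hCCne : (((a^2+b^2) - (a^2-b^2)*(x0*x1 - y0*y1)) - (1 - x0*x1 - y0*y1)*(a^2+b^2)) ≠ 0 := by rw [hCCval]; exact neg_ne_zero.2 (ne_of_gt h2K)
    have ht0' : (((a^2+b^2) - (a^2-b^2)*(x0*x1 - y0*y1)) + (1 - x0*x1 - y0*y1)*(a^2-b^2))*(y0*y1) = (((a^2+b^2) - (a^2-b^2)*(x0*x1 - y0*y1)) - (1 - x0*x1 - y0*y1)*(a^2+b^2)) := by linear_combination rel0 - (x0*x1)*hPP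
    have ht1' : (((a^2+b^2) - (a^2-b^2)*(x0*x1 - y0*y1)) + (1 - x0*x1 - y0*y1)*(a^2-b^2))*(y1*y2) = (((a^2+b^2) - (a^2-b^2)*(x0*x1 - y0*y1)) - (1 - x0*x1 - y0*y1)*(a^2+b^2)) := by linear_combination rel1 - (x1*x2)*hPP
    have ht2' : (((a^2+b^2) - (a^2-b^2)*(x0*x1 - y0*y1)) + (1 - x0*x1 - y0*y1)*(a^2-b^2))*(y2*y3) = (((a^2+b^2) - (a^2-b^2)*(x0*x1 - y0*y1)) - (1 - x0*x1 - y0*y1)*(a^2+b^2)) := by linear_combination rel2 - (x2*x3)*hPP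
    have hy0ne : y0 ≠ 0 := by intro h; apply hCCne; rw [← ht0', h]; ring
    have hy1ne : y1 ≠ 0 := by intro h; apply hCCne; rw [← ht0', h]; ring
    have hy2y0 : y2 = y0 := by
      have hq : (((a^2+b^2) - (a^2-b^2)*(x0*x1 - y0*y1)) + (1 - x0*x1 - y0*y1)*(a^2-b^2))*(y1*(y0-y2)) = 0 := by linear_combination ht0' - ht1'
      have h2 := (mul_eq_zero.1 hq).resolve_left hQQne
      have h3 := (mul_eq_zero.1 h2).resolve_left hy1ne
      linarith
    have hy3y1 : y3 = y1 := by
      have hq : (((a^2+b^2) - (a^2-b^2)*(x0*x1 - y0*y1)) + (1 - x0*x1 - y0*y1)*(a^2-b^2))*(y2*(y1-y3)) = 0 := by linear_combination ht1' - ht2'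
      have h2 := (mul_eq_zero.1 hq).resolve_left hQQne
      have hy2ne : y2 ≠ 0 := by rw [hy2y0]; exact hy0ne
      have h3 := (mul_eq_zero.1 h2).resolve_left hy2ne
      linarith
    have hx2x0 : x2 = -x0 := by
      have h9 : (x2-x0)*(x2+x0) = 0 := by linear_combination hu2 - hu0 - (y0+y2)*hy2y0
      rcases mul_eq_zero.1 h9 with h|h
      · exfalso
        exact hP02 (ext2 (by rw [hPx0, hPx2, show x2 = x0 by linarith])
          (by rw [hPy0, hPy2, hy2y0]))
      · linarith
    obtain ⟨z, hz02, hz13⟩ := hcross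
    obtain ⟨c1, c2, hc1, hc2, hc12, hzz⟩ := hz02
    obtain ⟨d1, d2, hd1, hd2, hd12, hzw⟩ := hz13
    have hz1a : z 1 = b*y0 := by
      rw [← hzz, show (c1 • P 0 + c2 • P 2) 1 = c1 * P 0 1 + c2 * P 2 1 from rfl,
        hPy0, hPy2, hy2y0]
      linear_combination (b*y0)*hc12
    have hz1b : z 1 = b*y1 := by
      rw [← hzw, show (d1 • P 1 + d2 • P 3) 1 = d1 * P 1 1 + d2 * P 3 1 from rfl,
        hPy1, hPy3, hy3y1]
      linear_combination (b*y1)*hd12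
    have hy1y0 : y1 = y0 := by
      have h := hz1a.symm.trans hz1b
      have := mul_left_cancel₀ hb' h; linarith
    have h9 : (x1-x0)*(x1+x0) = 0 := by linear_combination hu1 - hu0 - (y0+y1)*hy1y0
    rcases mul_eq_zero.1 h9 with h|h
    · exact hP01 (ext2 (by rw [hPx0, hPx1, show x1 = x0 by linarith])
        (by rw [hPy0, hPy1, hy1y0]))
    · exact hP12 (ext2 (by rw [hPx1, hPx2, hx2x0, show x1 = -x0 by linarith])
        (by rw [hPy1, hPy2, hy2y0, hy1y0]))
  · have dA : x1*((((a^2+b^2) - (a^2-b^2)*(x0*x1 - y0*y1)) - (1 - x0*x1 - y0*y1)*(a^2-b^2))*(x2-x0)) + y1*((((a^2+b^2) - (a^2-b^2)*(x0*x1 - y0*y1)) + (1 - x0*x1 - y0*y1)*(a^2-b^2))*(y2-y0)) = 0 := by linear_combination rel1 - rel0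
    have dB : x3*((((a^2+b^2) - (a^2-b^2)*(x0*x1 - y0*y1)) - (1 - x0*x1 - y0*y1)*(a^2-b^2))*(x2-x0)) + y3*((((a^2+b^2) - (a^2-b^2)*(x0*x1 - y0*y1)) + (1 - x0*x1 - y0*y1)*(a^2-b^2))*(y2-y0)) = 0 := by linear_combination rel2 - rel3
    by_cases hd : (((a^2+b^2) - (a^2-b^2)*(x0*x1 - y0*y1)) - (1 - x0*x1 - y0*y1)*(a^2-b^2))*(x2-x0) = 0 ∧ (((a^2+b^2) - (a^2-b^2)*(x0*x1 - y0*y1)) + (1 - x0*x1 - y0*y1)*(a^2-b^2))*(y2-y0) = 0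
    · exfalso
      have hx20 : x2 = x0 := by have := (mul_eq_zero.1 hd.1).resolve_left hPP; linarith
      have hy20 : y2 = y0 := by have := (mul_eq_zero.1 hd.2).resolve_left hQQne; linarith
      exact hP02 (ext2 (by rw [hPx0, hPx2, hx20]) (by rw [hPy0, hPy2, hy20]))
    · have hdet13 := ortho_det hd dA dB
      rcases unit_det_pm hu1 hu3 hdet13 with ⟨hx31, hy31⟩ | ⟨hx31, hy31⟩
      · exact absurd (ext2 (by rw [hPx1, hPx3, hx31]) (by rw [hPy1, hPy3, hy31])) hP13
      rw [hx31, hy31] at rel2 rel3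
      have dC : x0*((((a^2+b^2) - (a^2-b^2)*(x0*x1 - y0*y1)) - (1 - x0*x1 - y0*y1)*(a^2-b^2))*x1) + y0*((((a^2+b^2) - (a^2-b^2)*(x0*x1 - y0*y1)) + (1 - x0*x1 - y0*y1)*(a^2-b^2))*y1) = 0 := by linear_combination (rel0 - rel3)/2
      have dD : x2*((((a^2+b^2) - (a^2-b^2)*(x0*x1 - y0*y1)) - (1 - x0*x1 - y0*y1)*(a^2-b^2))*x1) + y2*((((a^2+b^2) - (a^2-b^2)*(x0*x1 - y0*y1)) + (1 - x0*x1 - y0*y1)*(a^2-b^2))*y1) = 0 := by linear_combination (rel1 - rel2)/2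
      have hd' : ¬((((a^2+b^2) - (a^2-b^2)*(x0*x1 - y0*y1)) - (1 - x0*x1 - y0*y1)*(a^2-b^2))*x1 = 0 ∧ (((a^2+b^2) - (a^2-b^2)*(x0*x1 - y0*y1)) + (1 - x0*x1 - y0*y1)*(a^2-b^2))*y1 = 0) := by
        rintro ⟨e1, e2⟩
        have hx1z : x1 = 0 := by have := (mul_eq_zero.1 e1).resolve_left hPP; linarith
        have hy1z : y1 = 0 := by have := (mul_eq_zero.1 e2).resolve_left hQQne; linarith
        rw [hx1z, hy1z] at hu1; norm_num at hu1
      have hdet02 := ortho_det hd' dC dD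
      rcases unit_det_pm hu0 hu2 hdet02 with ⟨hx20, hy20⟩ | ⟨hx20, hy20⟩
      · exact absurd (ext2 (by rw [hPx0, hPx2, hx20]) (by rw [hPy0, hPy2, hy20])) hP02
      rw [hx20, hy20] at rel1
      have hCC0 : (((a^2+b^2) - (a^2-b^2)*(x0*x1 - y0*y1)) - (1 - x0*x1 - y0*y1)*(a^2+b^2)) = 0 := by linear_combination (-(1:ℝ)/2)*rel0 + (-(1:ℝ)/2)*rel1
      have horth : b^2*(x0*x1) + a^2*(y0*y1) = 0 :=
        mul_left_cancel₀ (ne_of_gt (mul_pos two_pos hK0pos))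
          (by linear_combination rel0 + (1 - x0*x1 - y0*y1)*hCC0)
      have hN0pos : 0 < (b^2*x0^2 + a^2*y0^2) := by
        have h1 : (a^2-b^2)*y0^2 ≥ 0 := mul_nonneg (le_of_lt haabb) (sq_nonneg y0)
        have h2 : (0:ℝ) < b^2 := pow_pos hb 2
        have h3 : (b^2*x0^2 + a^2*y0^2) = b^2 + (a^2-b^2)*y0^2 + b^2*(x0^2+y0^2-1) := by ring
        have h4 : x0^2+y0^2-1 = 0 := by linarith [hu0]
        rw [h4, mul_zero, add_zero] at h3
        linarith
      have hN1pos : 0 < (b^2*x1^2 + a^2*y1^2) := by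
        have h1 : (a^2-b^2)*y1^2 ≥ 0 := mul_nonneg (le_of_lt haabb) (sq_nonneg y1)
        have h2 : (0:ℝ) < b^2 := pow_pos hb 2
        have h3 : (b^2*x1^2 + a^2*y1^2) = b^2 + (a^2-b^2)*y1^2 + b^2*(x1^2+y1^2-1) := by ring
        have h4 : x1^2+y1^2-1 = 0 := by linarith [hu1]
        rw [h4, mul_zero, add_zero] at h3
        linarith
      have hN0ne := ne_of_gt hN0pos
      have hN1ne := ne_of_gt hN1pos
      have h4all : ∀ j : ZMod 4, j = 0 ∨ j = 1 ∨ j = 2 ∨ j = 3 := by decide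
      refine ⟨fun i => if i = 0 then mk2 (a*b^2*(x0/(b^2*x0^2 + a^2*y0^2) + x1/(b^2*x1^2 + a^2*y1^2))) (a^2*b*(y0/(b^2*x0^2 + a^2*y0^2) + y1/(b^2*x1^2 + a^2*y1^2)))
        else if i = 1 then mk2 (a*b^2*(-x0/(b^2*x0^2 + a^2*y0^2) + x1/(b^2*x1^2 + a^2*y1^2))) (a^2*b*(-y0/(b^2*x0^2 + a^2*y0^2) + y1/(b^2*x1^2 + a^2*y1^2)))
        else if i = 2 then mk2 (a*b^2*(-x0/(b^2*x0^2 + a^2*y0^2) + -x1/(b^2*x1^2 + a^2*y1^2))) (a^2*b*(-y0/(b^2*x0^2 + a^2*y0^2) + -y1/(b^2*x1^2 + a^2*y1^2)))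
        else mk2 (a*b^2*(x0/(b^2*x0^2 + a^2*y0^2) + -x1/(b^2*x1^2 + a^2*y1^2))) (a^2*b*(y0/(b^2*x0^2 + a^2*y0^2) + -y1/(b^2*x1^2 + a^2*y1^2))), ?_, ?_, ?_, ?_, ?_⟩
      · intro i
        rcases h4all i with rfl | rfl | rfl | rfl
        · constructor
          · simp only [eq_self_iff_true, if_true, show ((1:ZMod 4) = 0) = False from eq_false (by decide), show ((2:ZMod 4) = 0) = False from eq_false (by decide), show ((2:ZMod 4) = 1) = False from eq_false (by decide), show ((3:ZMod 4) = 0) = False from eq_false (by decide), show ((3:ZMod 4) = 1) = False from eq_false (by decide), show ((3:ZMod 4) = 2) = False from eq_false (by decide), if_false]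
            simp only [TangentLine, Set.mem_setOf_eq, mk2_0, mk2_1]
            rw [hPx0, hPy0]
            exact memb ha' hb' hN0ne hN1ne (by linear_combination ((b^2*x0^2 + a^2*y0^2))*horth)
          · simp only [eq_self_iff_true, if_true, show ((1:ZMod 4) = 0) = False from eq_false (by decide), show ((2:ZMod 4) = 0) = False from eq_false (by decide), show ((2:ZMod 4) = 1) = False from eq_false (by decide), show ((3:ZMod 4) = 0) = False from eq_false (by decide), show ((3:ZMod 4) = 1) = False from eq_false (by decide), show ((3:ZMod 4) = 2) = False from eq_false (by decide), if_false]
            rw [show ((0:ZMod 4)+1) = 1 by decide]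
            simp only [TangentLine, Set.mem_setOf_eq, mk2_0, mk2_1]
            rw [hPx1, hPy1]
            exact memb ha' hb' hN0ne hN1ne (by linear_combination ((b^2*x1^2 + a^2*y1^2))*horth)
        · constructor
          · simp only [eq_self_iff_true, if_true, show ((1:ZMod 4) = 0) = False from eq_false (by decide), show ((2:ZMod 4) = 0) = False from eq_false (by decide), show ((2:ZMod 4) = 1) = False from eq_false (by decide), show ((3:ZMod 4) = 0) = False from eq_false (by decide), show ((3:ZMod 4) = 1) = False from eq_false (by decide), show ((3:ZMod 4) = 2) = False from eq_false (by decide), if_false]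
            simp only [TangentLine, Set.mem_setOf_eq, mk2_0, mk2_1]
            rw [hPx1, hPy1]
            exact memb ha' hb' hN0ne hN1ne (by linear_combination (-((b^2*x1^2 + a^2*y1^2)))*horth)
          · simp only [eq_self_iff_true, if_true, show ((1:ZMod 4) = 0) = False from eq_false (by decide), show ((2:ZMod 4) = 0) = False from eq_false (by decide), show ((2:ZMod 4) = 1) = False from eq_false (by decide), show ((3:ZMod 4) = 0) = False from eq_false (by decide), show ((3:ZMod 4) = 1) = False from eq_false (by decide), show ((3:ZMod 4) = 2) = False from eq_false (by decide), if_false]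
            rw [show ((1:ZMod 4)+1) = 2 by decide]
            simp only [TangentLine, Set.mem_setOf_eq, mk2_0, mk2_1]
            rw [hPx2, hPy2, hx20, hy20]
            exact memb ha' hb' hN0ne hN1ne (by linear_combination (-((b^2*x0^2 + a^2*y0^2)))*horth)
        · constructor
          · simp only [eq_self_iff_true, if_true, show ((1:ZMod 4) = 0) = False from eq_false (by decide), show ((2:ZMod 4) = 0) = False from eq_false (by decide), show ((2:ZMod 4) = 1) = False from eq_false (by decide), show ((3:ZMod 4) = 0) = False from eq_false (by decide), show ((3:ZMod 4) = 1) = False from eq_false (by decide), show ((3:ZMod 4) = 2) = False from eq_false (by decide), if_false]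
            simp only [TangentLine, Set.mem_setOf_eq, mk2_0, mk2_1]
            rw [hPx2, hPy2, hx20, hy20]
            exact memb ha' hb' hN0ne hN1ne (by linear_combination ((b^2*x0^2 + a^2*y0^2))*horth)
          · simp only [eq_self_iff_true, if_true, show ((1:ZMod 4) = 0) = False from eq_false (by decide), show ((2:ZMod 4) = 0) = False from eq_false (by decide), show ((2:ZMod 4) = 1) = False from eq_false (by decide), show ((3:ZMod 4) = 0) = False from eq_false (by decide), show ((3:ZMod 4) = 1) = False from eq_false (by decide), show ((3:ZMod 4) = 2) = False from eq_false (by decide), if_false]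
            rw [show ((2:ZMod 4)+1) = 3 by decide]
            simp only [TangentLine, Set.mem_setOf_eq, mk2_0, mk2_1]
            rw [hPx3, hPy3, hx31, hy31]
            exact memb ha' hb' hN0ne hN1ne (by linear_combination ((b^2*x1^2 + a^2*y1^2))*horth)
        · constructor
          · simp only [eq_self_iff_true, if_true, show ((1:ZMod 4) = 0) = False from eq_false (by decide), show ((2:ZMod 4) = 0) = False from eq_false (by decide), show ((2:ZMod 4) = 1) = False from eq_false (by decide), show ((3:ZMod 4) = 0) = False from eq_false (by decide), show ((3:ZMod 4) = 1) = False from eq_false (by decide), show ((3:ZMod 4) = 2) = False from eq_false (by decide), if_false]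
            simp only [TangentLine, Set.mem_setOf_eq, mk2_0, mk2_1]
            rw [hPx3, hPy3, hx31, hy31]
            exact memb ha' hb' hN0ne hN1ne (by linear_combination (-((b^2*x1^2 + a^2*y1^2)))*horth)
          · simp only [eq_self_iff_true, if_true, show ((1:ZMod 4) = 0) = False from eq_false (by decide), show ((2:ZMod 4) = 0) = False from eq_false (by decide), show ((2:ZMod 4) = 1) = False from eq_false (by decide), show ((3:ZMod 4) = 0) = False from eq_false (by decide), show ((3:ZMod 4) = 1) = False from eq_false (by decide), show ((3:ZMod 4) = 2) = False from eq_false (by decide), if_false]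
            rw [show ((3:ZMod 4)+1) = 0 by decide]
            simp only [TangentLine, Set.mem_setOf_eq, mk2_0, mk2_1]
            rw [hPx0, hPy0]
            exact memb ha' hb' hN0ne hN1ne (by linear_combination (-((b^2*x0^2 + a^2*y0^2)))*horth)
      · simp only [eq_self_iff_true, if_true, show ((1:ZMod 4) = 0) = False from eq_false (by decide), show ((2:ZMod 4) = 0) = False from eq_false (by decide), show ((2:ZMod 4) = 1) = False from eq_false (by decide), show ((3:ZMod 4) = 0) = False from eq_false (by decide), show ((3:ZMod 4) = 1) = False from eq_false (by decide), show ((3:ZMod 4) = 2) = False from eq_false (by decide), if_false]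
        refine ext2 ?_ ?_ <;> simp only [sub_0, sub_1, mk2_0, mk2_1] <;> ring
      · simp only [eq_self_iff_true, if_true, show ((1:ZMod 4) = 0) = False from eq_false (by decide), show ((2:ZMod 4) = 0) = False from eq_false (by decide), show ((2:ZMod 4) = 1) = False from eq_false (by decide), show ((3:ZMod 4) = 0) = False from eq_false (by decide), show ((3:ZMod 4) = 1) = False from eq_false (by decide), show ((3:ZMod 4) = 2) = False from eq_false (by decide), if_false]
        rw [inner2]
        simp only [sub_0, sub_1, mk2_0, mk2_1]
        field_simp
        linear_combination (4*a^2*b^2*((b^2*x0^2 + a^2*y0^2))*((b^2*x1^2 + a^2*y1^2)))*horth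
      · simp only [eq_self_iff_true, if_true, show ((1:ZMod 4) = 0) = False from eq_false (by decide), show ((2:ZMod 4) = 0) = False from eq_false (by decide), show ((2:ZMod 4) = 1) = False from eq_false (by decide), show ((3:ZMod 4) = 0) = False from eq_false (by decide), show ((3:ZMod 4) = 1) = False from eq_false (by decide), show ((3:ZMod 4) = 2) = False from eq_false (by decide), if_false]
        have hvd : (a*b^2*(x0/(b^2*x0^2 + a^2*y0^2) + x1/(b^2*x1^2 + a^2*y1^2)))*(b*(x0-x1))
            + (a^2*b*(y0/(b^2*x0^2 + a^2*y0^2) + y1/(b^2*x1^2 + a^2*y1^2)))*(a*(y0-y1)) = 0 := by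
          field_simp
          linear_combination (a*b*(((b^2*x0^2 + a^2*y0^2)) - ((b^2*x1^2 + a^2*y1^2))))*horth
        have hwd : (a*(x0+x1))*(b*(x0-x1)) + (b*(y0+y1))*(a*(y0-y1)) = 0 := by
          linear_combination a*b*hu0 - a*b*hu1
        have hdne : ¬(b*(x0-x1) = 0 ∧ a*(y0-y1) = 0) := by
          rintro ⟨e1, e2⟩
          have h1 : x0 = x1 := by have := (mul_eq_zero.1 e1).resolve_left hb'; linarith
          have h2 : y0 = y1 := by have := (mul_eq_zero.1 e2).resolve_left ha'; linarith
          exact hP01 (ext2 (by rw [hPx0, hPx1, h1]) (by rw [hPy0, hPy1, h2]))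
        have hWne : ¬(a*(x0+x1) = 0 ∧ b*(y0+y1) = 0) := by
          rintro ⟨e1, e2⟩
          have h1 : x1 = -x0 := by have := (mul_eq_zero.1 e1).resolve_left ha'; linarith
          have h2 : y1 = -y0 := by have := (mul_eq_zero.1 e2).resolve_left hb'; linarith
          exact hP12 (ext2 (by rw [hPx1, hPx2, hx20, h1]) (by rw [hPy1, hPy2, hy20, h2]))
        obtain ⟨c, hc0, hc1⟩ := det_parallel (ortho_det hdne hvd hwd) hWne
        refine ⟨2*c, ext2 ?_ ?_⟩
        · simp only [sub_0, smul_0, mk2_0]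
          rw [hPx2, hPx1, hx20]
          linear_combination (-2)*hc0
        · simp only [sub_1, smul_1, mk2_1]
          rw [hPy2, hPy1, hy20]
          linear_combination (-2)*hc1
      · simp only [eq_self_iff_true, if_true, show ((1:ZMod 4) = 0) = False from eq_false (by decide), show ((2:ZMod 4) = 0) = False from eq_false (by decide), show ((2:ZMod 4) = 1) = False from eq_false (by decide), show ((3:ZMod 4) = 0) = False from eq_false (by decide), show ((3:ZMod 4) = 1) = False from eq_false (by decide), show ((3:ZMod 4) = 2) = False from eq_false (by decide), if_false]
        have hvd : (a*b^2*(-x0/(b^2*x0^2 + a^2*y0^2) + x1/(b^2*x1^2 + a^2*y1^2)))*(b*(x0+x1))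
            + (a^2*b*(-y0/(b^2*x0^2 + a^2*y0^2) + y1/(b^2*x1^2 + a^2*y1^2)))*(a*(y0+y1)) = 0 := by
          field_simp
          linear_combination (a*b*(((b^2*x0^2 + a^2*y0^2)) - ((b^2*x1^2 + a^2*y1^2))))*horth
        have hwd : (a*(x1-x0))*(b*(x0+x1)) + (b*(y1-y0))*(a*(y0+y1)) = 0 := by
          linear_combination a*b*hu1 - a*b*hu0
        have hdne : ¬(b*(x0+x1) = 0 ∧ a*(y0+y1) = 0) := by
          rintro ⟨e1, e2⟩
          have h1 : x1 = -x0 := by have := (mul_eq_zero.1 e1).resolve_left hb'; linarith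
          have h2 : y1 = -y0 := by have := (mul_eq_zero.1 e2).resolve_left ha'; linarith
          exact hP12 (ext2 (by rw [hPx1, hPx2, hx20, h1]) (by rw [hPy1, hPy2, hy20, h2]))
        have hWne : ¬(a*(x1-x0) = 0 ∧ b*(y1-y0) = 0) := by
          rintro ⟨e1, e2⟩
          have h1 : x1 = x0 := by have := (mul_eq_zero.1 e1).resolve_left ha'; linarith
          have h2 : y1 = y0 := by have := (mul_eq_zero.1 e2).resolve_left hb'; linarith
          exact hP01 (ext2 (by rw [hPx0, hPx1, h1]) (by rw [hPy0, hPy1, h2]))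
        obtain ⟨c, hc0, hc1⟩ := det_parallel (ortho_det hdne hvd hwd) hWne
        refine ⟨-2*c, ext2 ?_ ?_⟩
        · simp only [sub_0, smul_0, mk2_0]
          rw [hPx1, hPx0]
          linear_combination (-2)*hc0
        · simp only [sub_1, smul_1, mk2_1]
          rw [hPy1, hPy0]
          linear_combination (-2)*hc1
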